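/- Let f be an excursion. Then d_L[f] and d_T[f] are pseudo-distances on [0,1]: they are nonnegative, finite, symmetric, vanish on the diagonal, and satisfy the triangle inequality. Consequently d_V[f] = d_T[f] + 2·d_L[f] is also a pseudo-distance on [0,1]. -/

import Mathlib

open Set Filter Topology
open scoped Classical

noncomputable section

/-- Left limit of `f` at `t`, with the convention `f(0−) = 0`. -/
def lm (f : ℝ → ℝ) (t : ℝ) : ℝ := if t = 0 then 0 else Function.leftLim f t

/-- The jump `Δ_t(f) = f t − f(t−)`. -/
def jump (f : ℝ → ℝ) (t : ℝ) : ℝ := f t - lm f t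

/-- `inf_{[s,t]} f`. -/
def infIcc (f : ℝ → ℝ) (s t : ℝ) : ℝ := sInf (f '' Icc s t)

/-- An excursion: a càdlàg function on `[0,1]`, nonnegative, vanishing at `1` (and
extended by `0` outside `[0,1]`), all of whose jumps are nonnegative. -/
structure IsExcursion (f : ℝ → ℝ) : Prop where
  nonneg : ∀ t ∈ Icc (0:ℝ) 1, 0 ≤ f t
  zero_outside : ∀ t, t ∉ Icc (0:ℝ) 1 → f t = 0
  rightCont : ∀ t ∈ Ico (0:ℝ) 1, Tendsto f (𝓝[>] t) (𝓝 (f t))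
  leftLimEx : ∀ t ∈ Ioc (0:ℝ) 1, Tendsto f (𝓝[<] t) (𝓝 (Function.leftLim f t))
  one : f 1 = 0
  jump_nonneg : ∀ t ∈ Icc (0:ℝ) 1, 0 ≤ jump f t

/-- The genealogical relation `s ⪯_f t` : `s ≤ t` and `f(s−) ≤ inf_{[s,t]} f`. -/
def pre (f : ℝ → ℝ) (s t : ℝ) : Prop := s ≤ t ∧ lm f s ≤ infIcc f s t

/-- `x_s^t(f) = 1_{s ≤ t} · max(inf_{[s,t]} f − f(s−), 0)`. -/
def xst (f : ℝ → ℝ) (s t : ℝ) : ℝ := if s ≤ t then max (infIcc f s t - lm f s) 0 else 0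

/-- The most recent common ancestor `s ∧_f t`. -/
def mrca (f : ℝ → ℝ) (s t : ℝ) : ℝ := sSup {r : ℝ | 0 ≤ r ∧ pre f r s ∧ pre f r t}

/-- `δ_t(a,b) = min(|a−b|, Δ_t(f) − |a−b|)`, the circle pseudo-distance on `[0, Δ_t(f)]`. -/
def cdel (f : ℝ → ℝ) (t a b : ℝ) : ℝ := min |a - b| (jump f t - |a - b|)

/-- `d_O(s,t) = ∑_{s ≺_f r ⪯_f t} δ_r(0, x_r^t)`. -/
def dO (f : ℝ → ℝ) (s t : ℝ) : ℝ :=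
  ∑' r : ℝ, if pre f s r ∧ s < r ∧ pre f r t then cdel f r 0 (xst f r t) else 0

/-- `d_T(s,t) = f t − inf_{[s,t]} f − ∑_{s ≺_f r ⪯_f t} x_r^t`, intended for `s ⪯_f t`. -/
def dTanc (f : ℝ → ℝ) (s t : ℝ) : ℝ :=
  f t - infIcc f s t - ∑' r : ℝ, if pre f s r ∧ s < r ∧ pre f r t then xst f r t else 0

/-- The looptree pseudo-distance `d_L[f]`. -/
def dL (f : ℝ → ℝ) (s t : ℝ) : ℝ :=
  cdel f (mrca f s t) (xst f (mrca f s t) s) (xst f (mrca f s t) t)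
    + dO f (mrca f s t) s + dO f (mrca f s t) t

/-- The tree pseudo-distance `d_T[f]`. -/
def dT (f : ℝ → ℝ) (s t : ℝ) : ℝ := dTanc f (mrca f s t) s + dTanc f (mrca f s t) t

/-- The vernation pseudo-distance `d_V[f] = d_T[f] + 2·d_L[f]`. -/
def dV (f : ℝ → ℝ) (s t : ℝ) : ℝ := dT f s t + 2 * dL f s t

/-- `Jf(t) = ∑_{r ⪯_f t} x_r^t(f)`. -/
def Jop (f : ℝ → ℝ) (t : ℝ) : ℝ := ∑' r : ℝ, if pre f r t then xst f r t else 0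

/-- `J^ε f(t) = ∑_{r ⪯_f t, Δ_r(f) ≥ ε} x_r^t(f)`. -/
def Jeps (f : ℝ → ℝ) (ε : ℝ) (t : ℝ) : ℝ :=
  ∑' r : ℝ, if pre f r t ∧ ε ≤ jump f r then xst f r t else 0

/-- Pure jump growth (PJG) excursion: `f(t) = ∑_{r ⪯_f t} x_r^t(f)` on `[0,1]`. -/
def IsPJG (f : ℝ → ℝ) : Prop := ∀ t ∈ Icc (0:ℝ) 1, f t = Jop f t

/-- An increasing bijection from `[0,1]` onto itself. -/
def IncBij (l : ℝ → ℝ) : Prop :=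
  StrictMonoOn l (Icc (0:ℝ) 1) ∧ Set.BijOn l (Icc (0:ℝ) 1) (Icc (0:ℝ) 1)

/-- The Skorokhod distance `ρ` on functions `[0,1] → ℝ`. -/
def skor (f g : ℝ → ℝ) : ℝ :=
  sInf {c : ℝ | 0 ≤ c ∧ ∃ l : ℝ → ℝ, IncBij l ∧
    ∀ x ∈ Icc (0:ℝ) 1, |l x - x| ≤ c ∧ |f x - g (l x)| ≤ c}

/-!
The relation `⪯_f` is a tree order on `[0,1]`: the ancestors of a point are totally ordered, and
the common ancestors of `s` and `t` form a set containing its supremum, so `s ∧_f t` is the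
greatest of them. Along an ancestral line `a ≺_f b ⪯_f c` the sums defining `d_O` and `d_T`
split at `b`, because `x_r^c = x_r^b` for `r ≺_f b`; and the `x_r^t` over the ancestors `r` of
`t` in `(a, t]` telescope to at most `f t - inf_{[a,t]} f`, so all sums converge. Consequently
`d_T(s,t) = h(s) + h(t) - 2 h(s ∧ t)` for the height `h = d_T(0, ·)`, a tree distance, while
`d_L` adds up circle distances `δ_r` along the two branches from `s ∧ t`; its triangle
inequality comes down to the one for `δ` at the point where the branches separate.
-/

lemma infIcc_self (f : ℝ → ℝ) (t : ℝ) : infIcc f t t = f t := by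
  rw [infIcc, Icc_self, image_singleton, csInf_singleton]

lemma xst_nonneg (f : ℝ → ℝ) (s t : ℝ) : 0 ≤ xst f s t := by
  unfold xst
  split_ifs
  exacts [le_max_right _ _, le_rfl]

lemma xst_eq_of_pre {f : ℝ → ℝ} {m t : ℝ} (h : pre f m t) :
    xst f m t = infIcc f m t - lm f m := by
  rw [xst, if_pos h.1, max_eq_left (sub_nonneg.2 h.2)]

lemma mrca_comm (f : ℝ → ℝ) (s t : ℝ) : mrca f s t = mrca f t s := by
  simp only [mrca, and_comm (a := pre f _ s)]

lemma dT_comm (f : ℝ → ℝ) (s t : ℝ) : dT f s t = dT f t s := by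
  rw [dT, dT, mrca_comm f s t, add_comm]

section CircleDistance

variable {f : ℝ → ℝ} {t a b c : ℝ}

lemma cdel_self (hj : 0 ≤ jump f t) (a : ℝ) : cdel f t a a = 0 := by
  rw [cdel, sub_self, abs_zero, sub_zero, min_eq_left hj]

lemma cdel_nonneg (ha : a ∈ Icc 0 (jump f t)) (hb : b ∈ Icc 0 (jump f t)) :
    0 ≤ cdel f t a b :=
  le_min (abs_nonneg _) (sub_nonneg.2 (by simpa using abs_sub_le_of_le_of_le ha.1 ha.2 hb.1 hb.2))

lemma cdel_triangle (ha : a ∈ Icc 0 (jump f t)) (hb : b ∈ Icc 0 (jump f t))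
    (hc : c ∈ Icc 0 (jump f t)) : cdel f t a c ≤ cdel f t a b + cdel f t b c := by
  obtain ⟨ha0, ha1⟩ := ha
  obtain ⟨hb0, hb1⟩ := hb
  obtain ⟨hc0, hc1⟩ := hc
  simp only [cdel, min_def]
  split_ifs <;>
  rcases abs_cases (a - c) with ⟨h3, h3'⟩ | ⟨h3, h3'⟩ <;>
  rcases abs_cases (a - b) with ⟨h1, h1'⟩ | ⟨h1, h1'⟩ <;>
  rcases abs_cases (b - c) with ⟨h2, h2'⟩ | ⟨h2, h2'⟩ <;> linarith

lemma cdel_zero_mem_Icc (ha : a ∈ Icc 0 (jump f t)) : cdel f t 0 a ∈ Icc 0 a := by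
  rw [cdel, zero_sub, abs_neg, abs_of_nonneg ha.1]
  exact ⟨le_min ha.1 (sub_nonneg.2 ha.2), min_le_left _ _⟩

end CircleDistance

lemma cdel_comm (f : ℝ → ℝ) (t a b : ℝ) : cdel f t a b = cdel f t b a := by
  rw [cdel, cdel, abs_sub_comm]

lemma dL_comm (f : ℝ → ℝ) (s t : ℝ) : dL f s t = dL f t s := by
  rw [dL, dL, mrca_comm f s t, cdel_comm]
  ring

def ancTerm (f : ℝ → ℝ) (φ : ℝ → ℝ → ℝ) (a c r : ℝ) : ℝ :=
  if pre f a r ∧ a < r ∧ pre f r c then φ r (xst f r c) else 0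

def ancSum (f : ℝ → ℝ) (φ : ℝ → ℝ → ℝ) (a c : ℝ) : ℝ := ∑' r, ancTerm f φ a c r

lemma dO_eq_ancSum (f : ℝ → ℝ) (a c : ℝ) : dO f a c = ancSum f (fun r x => cdel f r 0 x) a c :=
  rfl

lemma dTanc_eq_ancSum (f : ℝ → ℝ) (a c : ℝ) :
    dTanc f a c = f c - infIcc f a c - ancSum f (fun _ x => x) a c :=
  rfl

lemma ancTerm_self (f : ℝ → ℝ) (φ : ℝ → ℝ → ℝ) (t r : ℝ) : ancTerm f φ t t r = 0 :=
  if_neg fun h => h.2.1.not_ge h.2.2.1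

lemma dO_self (f : ℝ → ℝ) (t : ℝ) : dO f t t = 0 := by
  simp only [dO_eq_ancSum, ancSum, ancTerm_self, tsum_zero]

lemma dTanc_self (f : ℝ → ℝ) (t : ℝ) : dTanc f t t = 0 := by
  simp only [dTanc_eq_ancSum, ancSum, ancTerm_self, tsum_zero, infIcc_self, sub_self]

def height (f : ℝ → ℝ) (t : ℝ) : ℝ := dTanc f 0 t

lemma leftLim_le_of_frequently {g : ℝ → ℝ} {m c : ℝ}
    (hm : Tendsto g (𝓝[<] m) (𝓝 (Function.leftLim g m)))
    (hex : ∀ᶠ r in 𝓝[<] m, Tendsto g (𝓝[<] r) (𝓝 (Function.leftLim g r)))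
    (hfreq : ∃ᶠ r in 𝓝[<] m, Function.leftLim g r ≤ c) : Function.leftLim g m ≤ c := by
  by_contra! hc
  obtain ⟨c', hcc', hc'm⟩ := exists_between hc
  obtain ⟨l, hlm, hl⟩ := mem_nhdsLT_iff_exists_Ioo_subset.1 (hm (Ioi_mem_nhds hc'm))
  have hlarge : ∀ᶠ r in 𝓝[<] m, c < Function.leftLim g r := by
    filter_upwards [hex, Ioo_mem_nhdsLT hlm] with r hr hrI
    refine hcc'.trans_le (ge_of_tendsto hr ?_)
    filter_upwards [Ioo_mem_nhdsLT hrI.1] with v hv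
    exact (hl ⟨hv.1, hv.2.trans hrI.2⟩).le
  obtain ⟨r, hrc, hr⟩ := (hfreq.and_eventually hlarge).exists
  exact hrc.not_gt hr

namespace IsExcursion

variable {f : ℝ → ℝ}

lemma apply_nonneg (hf : IsExcursion f) (x : ℝ) : 0 ≤ f x := by
  by_cases hx : x ∈ Icc (0:ℝ) 1
  · exact hf.nonneg x hx
  · rw [hf.zero_outside x hx]

lemma bddBelow_image (hf : IsExcursion f) (s t : ℝ) : BddBelow (f '' Icc s t) :=
  ⟨0, by rintro _ ⟨u, -, rfl⟩; exact hf.apply_nonneg u⟩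

lemma infIcc_nonneg (hf : IsExcursion f) (s t : ℝ) : 0 ≤ infIcc f s t :=
  Real.sInf_nonneg (by rintro _ ⟨u, -, rfl⟩; exact hf.apply_nonneg u)

lemma infIcc_le (hf : IsExcursion f) {s u t : ℝ} (hsu : s ≤ u) (hut : u ≤ t) :
    infIcc f s t ≤ f u :=
  csInf_le (hf.bddBelow_image s t) ⟨u, ⟨hsu, hut⟩, rfl⟩

lemma infIcc_anti (hf : IsExcursion f) {s' s t t' : ℝ} (hs : s' ≤ s) (ht : t ≤ t')
    (hst : s ≤ t) : infIcc f s' t' ≤ infIcc f s t :=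
  csInf_le_csInf (hf.bddBelow_image s' t') ((nonempty_Icc.2 hst).image f)
    (image_mono (Icc_subset_Icc hs ht))

lemma infIcc_split (hf : IsExcursion f) {s b t : ℝ} (hsb : s ≤ b) (hbt : b ≤ t) :
    infIcc f s t = min (infIcc f s b) (infIcc f b t) := by
  refine le_antisymm (le_min (hf.infIcc_anti le_rfl hbt hsb) (hf.infIcc_anti hsb le_rfl hbt)) ?_
  refine le_csInf ((nonempty_Icc.2 (hsb.trans hbt)).image f) ?_
  rintro _ ⟨u, ⟨hsu, hut⟩, rfl⟩
  rcases le_total u b with hub | hbu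
  · exact (min_le_left _ _).trans (hf.infIcc_le hsu hub)
  · exact (min_le_right _ _).trans (hf.infIcc_le hbu hut)

lemma infIcc_le_lm (hf : IsExcursion f) {a b t : ℝ} (ha : 0 ≤ a) (hab : a < b) (hbt : b ≤ t)
    (hb1 : b ≤ 1) : infIcc f a t ≤ lm f b := by
  have hb0 : 0 < b := ha.trans_lt hab
  rw [lm, if_neg hb0.ne']
  refine ge_of_tendsto (hf.leftLimEx b ⟨hb0, hb1⟩) ?_
  filter_upwards [Ioo_mem_nhdsLT hab] with v hv
  exact hf.infIcc_le hv.1.le (hv.2.le.trans hbt)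

lemma lm_le (hf : IsExcursion f) {t : ℝ} (ht : t ∈ Icc (0:ℝ) 1) : lm f t ≤ f t :=
  sub_nonneg.1 (hf.jump_nonneg t ht)

lemma pre_refl (hf : IsExcursion f) {t : ℝ} (ht : t ∈ Icc (0:ℝ) 1) : pre f t t :=
  ⟨le_rfl, (infIcc_self f t).symm ▸ hf.lm_le ht⟩

lemma pre_zero (hf : IsExcursion f) {s : ℝ} (hs : 0 ≤ s) : pre f 0 s :=
  ⟨hs, by rw [lm, if_pos rfl]; exact hf.infIcc_nonneg 0 s⟩

lemma pre_trans (hf : IsExcursion f) {a b c : ℝ} (ha : 0 ≤ a) (hc : c ≤ 1)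
    (hab : pre f a b) (hbc : pre f b c) : pre f a c := by
  rcases hab.1.eq_or_lt with rfl | hlt
  · exact hbc
  refine ⟨hab.1.trans hbc.1, ?_⟩
  rw [hf.infIcc_split hab.1 hbc.1, le_min_iff]
  exact ⟨hab.2, hab.2.trans ((hf.infIcc_le_lm ha hlt le_rfl (hbc.1.trans hc)).trans hbc.2)⟩

lemma pre_of_le (hf : IsExcursion f) {a b c : ℝ} (hac : pre f a c) (hbc : pre f b c)
    (hab : a ≤ b) : pre f a b :=
  ⟨hab, hac.2.trans (hf.infIcc_anti le_rfl hbc.1 hab)⟩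

lemma xst_mem_Icc (hf : IsExcursion f) {m t : ℝ} (hm : m ∈ Icc (0:ℝ) 1) (hmt : m ≤ t) :
    xst f m t ∈ Icc 0 (jump f m) := by
  refine ⟨xst_nonneg f m t, ?_⟩
  rw [xst, if_pos hmt, jump]
  exact max_le (by linarith [hf.infIcc_le le_rfl hmt]) (hf.jump_nonneg m hm)

lemma xst_self (hf : IsExcursion f) {t : ℝ} (ht : t ∈ Icc (0:ℝ) 1) : xst f t t = jump f t := by
  rw [xst, if_pos le_rfl, infIcc_self]
  exact max_eq_left (hf.jump_nonneg t ht)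

lemma xst_le_infIcc_sub (hf : IsExcursion f) {a m t : ℝ} (ha : 0 ≤ a) (ham : a < m)
    (hmt : m ≤ t) (ht1 : t ≤ 1) : xst f m t ≤ infIcc f m t - infIcc f a t := by
  rw [xst, if_pos hmt]
  exact max_le (by linarith [hf.infIcc_le_lm ha ham hmt (hmt.trans ht1)])
    (sub_nonneg.2 (hf.infIcc_anti ham.le le_rfl hmt))

lemma infIcc_eq_of_lt_of_pre (hf : IsExcursion f) {r b c : ℝ} (hr : 0 ≤ r) (hrb : r < b)
    (hbc : pre f b c) (hc1 : c ≤ 1) : infIcc f r c = infIcc f r b := by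
  rw [hf.infIcc_split hrb.le hbc.1, min_eq_left]
  exact (hf.infIcc_le_lm hr hrb le_rfl (hbc.1.trans hc1)).trans hbc.2

lemma xst_eq_of_lt_of_pre (hf : IsExcursion f) {r b c : ℝ} (hr : 0 ≤ r) (hrb : r < b)
    (hbc : pre f b c) (hc1 : c ≤ 1) : xst f r c = xst f r b := by
  rw [xst, xst, if_pos (hrb.le.trans hbc.1), if_pos hrb.le,
    hf.infIcc_eq_of_lt_of_pre hr hrb hbc hc1]

/-- The `x_r^t` at the ancestors `r` of `t` in `(a, t]` telescope into the growth of `f` from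
`inf_{[a,t]} f` to `f t`. -/
lemma sum_xst_le (hf : IsExcursion f) {t : ℝ} (ht1 : t ≤ 1) (F : Finset ℝ) :
    ∀ a, 0 ≤ a → a ≤ t → (∀ r ∈ F, a < r ∧ pre f r t) →
      ∑ r ∈ F, xst f r t ≤ f t - infIcc f a t := by
  induction F using Finset.induction_on_min with
  | empty =>
    intro a _ hat _
    simpa using hf.infIcc_le hat le_rfl
  | insert m F hmF ih =>
    intro a ha hat hF
    obtain ⟨ham, hmt⟩ := hF m (Finset.mem_insert_self m F)
    have hrest := ih m (ha.trans ham.le) hmt.1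
      fun r hr => ⟨hmF r hr, (hF r (Finset.mem_insert_of_mem hr)).2⟩
    rw [Finset.sum_insert fun hm => (hmF m hm).false]
    linarith [hf.xst_le_infIcc_sub ha ham hmt.1 ht1]

lemma ancTerm_mem_Icc (hf : IsExcursion f) {φ : ℝ → ℝ → ℝ}
    (hφ : ∀ r, ∀ x ∈ Icc 0 (jump f r), φ r x ∈ Icc 0 x) {a c : ℝ} (ha : 0 ≤ a) (hc1 : c ≤ 1)
    (r : ℝ) : ancTerm f φ a c r ∈ Icc 0 (ancTerm f (fun _ x => x) a c r) := by
  unfold ancTerm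
  split_ifs with h
  · exact hφ r _ (hf.xst_mem_Icc ⟨ha.trans h.2.1.le, h.2.2.1.trans hc1⟩ h.2.2.1)
  · exact ⟨le_rfl, le_rfl⟩

lemma sum_ancTerm_le (hf : IsExcursion f) {a c : ℝ} (ha : 0 ≤ a) (hac : a ≤ c) (hc1 : c ≤ 1)
    (F : Finset ℝ) : ∑ r ∈ F, ancTerm f (fun _ x => x) a c r ≤ f c - infIcc f a c := by
  simp only [ancTerm, ← Finset.sum_filter]
  exact hf.sum_xst_le hc1 _ a ha hac fun r hr =>
    ⟨(Finset.mem_filter.1 hr).2.2.1, (Finset.mem_filter.1 hr).2.2.2⟩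

lemma summable_ancTerm (hf : IsExcursion f) {φ : ℝ → ℝ → ℝ}
    (hφ : ∀ r, ∀ x ∈ Icc 0 (jump f r), φ r x ∈ Icc 0 x)
    {a c : ℝ} (ha : 0 ≤ a) (hac : a ≤ c) (hc1 : c ≤ 1) : Summable (ancTerm f φ a c) :=
  summable_of_sum_le (fun r => (hf.ancTerm_mem_Icc hφ ha hc1 r).1) fun F =>
    (Finset.sum_le_sum fun r _ => (hf.ancTerm_mem_Icc hφ ha hc1 r).2).trans
      (hf.sum_ancTerm_le ha hac hc1 F)

lemma ancSum_le (hf : IsExcursion f) {a c : ℝ} (ha : 0 ≤ a) (hac : a ≤ c) (hc1 : c ≤ 1) :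
    ancSum f (fun _ x => x) a c ≤ f c - infIcc f a c :=
  (hf.summable_ancTerm (fun _ _ hx => ⟨hx.1, le_rfl⟩) ha hac hc1).tsum_le_of_sum_le
    (hf.sum_ancTerm_le ha hac hc1)

/-- Splitting `(a, c]` at an intermediate ancestor `b` only changes the term at `b` itself,
since `x_r^c = x_r^b` for `r ≺_f b`. -/
lemma ancTerm_split (hf : IsExcursion f) (φ : ℝ → ℝ → ℝ) {a b c : ℝ} (ha : 0 ≤ a) (hab : a < b)
    (hpab : pre f a b) (hpbc : pre f b c) (hc1 : c ≤ 1) (r : ℝ) :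
    ancTerm f φ a c r = ancTerm f φ a b r
      + (if r = b then φ b (xst f b c) - φ b (xst f b b) else 0) + ancTerm f φ b c r := by
  rcases lt_trichotomy r b with hrb | rfl | hbr
  · have hbc : ancTerm f φ b c r = 0 := if_neg fun h => hrb.not_gt h.2.1
    have hac : ancTerm f φ a c r = ancTerm f φ a b r := by
      unfold ancTerm
      by_cases har : pre f a r ∧ a < r
      · have hr0 := ha.trans har.2.le
        rw [hf.xst_eq_of_lt_of_pre hr0 hrb hpbc hc1]
        exact if_congr (and_congr_right' (and_congr_right'
          ⟨fun h => hf.pre_of_le h hpbc hrb.le, fun h => hf.pre_trans hr0 hc1 h hpbc⟩)) rfl rfl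
      · rw [if_neg fun h => har ⟨h.1, h.2.1⟩, if_neg fun h => har ⟨h.1, h.2.1⟩]
    rw [hac, hbc, if_neg hrb.ne]
    ring
  · have hr : r ∈ Icc (0:ℝ) 1 := ⟨ha.trans hab.le, hpbc.1.trans hc1⟩
    simp only [ancTerm, if_pos (⟨hpab, hab, hpbc⟩ : pre f a r ∧ a < r ∧ pre f r c),
      if_pos (⟨hpab, hab, hf.pre_refl hr⟩ : pre f a r ∧ a < r ∧ pre f r r), lt_irrefl,
      false_and, and_false, if_false, if_true]
    ring
  · have hab' : ancTerm f φ a b r = 0 := if_neg fun h => hbr.not_ge h.2.2.1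
    have hac : ancTerm f φ a c r = ancTerm f φ b c r := by
      unfold ancTerm
      refine if_congr ⟨fun h => ⟨hf.pre_of_le hpbc h.2.2 hbr.le, hbr, h.2.2⟩, fun h => ?_⟩ rfl rfl
      exact ⟨hf.pre_trans ha (h.2.2.1.trans hc1) hpab h.1, hab.trans hbr, h.2.2⟩
    rw [hac, hab', if_neg hbr.ne']
    ring

lemma ancSum_split (hf : IsExcursion f) {φ : ℝ → ℝ → ℝ}
    (hφ : ∀ r, ∀ x ∈ Icc 0 (jump f r), φ r x ∈ Icc 0 x) {a b c : ℝ} (ha : 0 ≤ a)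
    (hab : a < b) (hpab : pre f a b) (hpbc : pre f b c) (hc1 : c ≤ 1) :
    ancSum f φ a c
      = ancSum f φ a b + (φ b (xst f b c) - φ b (xst f b b)) + ancSum f φ b c := by
  have hb1 : b ≤ 1 := hpbc.1.trans hc1
  have hab_summable := hf.summable_ancTerm hφ ha hab.le hb1
  have hbc_summable := hf.summable_ancTerm hφ (ha.trans hab.le) hpbc.1 hc1
  unfold ancSum
  rw [tsum_congr (hf.ancTerm_split φ ha hab hpab hpbc hc1),
    (hab_summable.add (hasSum_ite_eq b _).summable).tsum_add hbc_summable,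
    hab_summable.tsum_add (hasSum_ite_eq b _).summable,
    tsum_ite_eq b (fun _ => φ b (xst f b c) - φ b (xst f b b))]

lemma dO_split (hf : IsExcursion f) {a b c : ℝ} (ha : 0 ≤ a) (hab : a < b)
    (hpab : pre f a b) (hpbc : pre f b c) (hc1 : c ≤ 1) :
    dO f a c = dO f a b + cdel f b 0 (xst f b c) + dO f b c := by
  have hb : b ∈ Icc (0:ℝ) 1 := ⟨ha.trans hab.le, hpbc.1.trans hc1⟩
  have hj := hf.jump_nonneg b hb
  have hcirc : cdel f b 0 (xst f b b) = 0 := by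
    rw [hf.xst_self hb, cdel, zero_sub, abs_neg, abs_of_nonneg hj, sub_self, min_eq_right hj]
  rw [dO_eq_ancSum, dO_eq_ancSum, dO_eq_ancSum,
    hf.ancSum_split (fun _ _ => cdel_zero_mem_Icc) ha hab hpab hpbc hc1, hcirc]
  ring

lemma dTanc_split (hf : IsExcursion f) {a b c : ℝ} (ha : 0 ≤ a) (hab : a < b)
    (hpab : pre f a b) (hpbc : pre f b c) (hc1 : c ≤ 1) :
    dTanc f a c = dTanc f a b + dTanc f b c := by
  have hb : b ∈ Icc (0:ℝ) 1 := ⟨ha.trans hab.le, hpbc.1.trans hc1⟩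
  rw [dTanc_eq_ancSum, dTanc_eq_ancSum, dTanc_eq_ancSum,
    hf.ancSum_split (fun _ _ hx => ⟨hx.1, le_rfl⟩) ha hab hpab hpbc hc1, hf.xst_self hb,
    xst_eq_of_pre hpbc, hf.infIcc_eq_of_lt_of_pre ha hab hpbc hc1, jump]
  ring

lemma dO_nonneg (hf : IsExcursion f) {a t : ℝ} (ha : 0 ≤ a) (ht1 : t ≤ 1) : 0 ≤ dO f a t :=
  tsum_nonneg fun r => (hf.ancTerm_mem_Icc (fun _ _ => cdel_zero_mem_Icc) ha ht1 r).1

lemma dTanc_nonneg (hf : IsExcursion f) {a t : ℝ} (ha : 0 ≤ a) (hat : a ≤ t) (ht1 : t ≤ 1) :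
    0 ≤ dTanc f a t := by
  linarith [hf.ancSum_le ha hat ht1, dTanc_eq_ancSum f a t]

/-- `f(m−)` is approached by the left limits `f(r−)` at ancestors `r ↑ m`. -/
lemma pre_sSup (hf : IsExcursion f) {B : Set ℝ} {s : ℝ} (hs1 : s ≤ 1) (hB : B.Nonempty)
    (hBs : ∀ r ∈ B, 0 ≤ r ∧ pre f r s) : pre f (sSup B) s := by
  have hlub : IsLUB B (sSup B) := isLUB_csSup hB ⟨s, fun r hr => (hBs r hr).2.1⟩
  have hms : sSup B ≤ s := hlub.2 fun r hr => (hBs r hr).2.1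
  by_cases hmB : sSup B ∈ B
  · exact (hBs _ hmB).2
  have hfreq : ∃ᶠ r in 𝓝[<] sSup B, r ∈ B := by
    refine frequently_iff.2 fun hU => ?_
    obtain ⟨l, hlm, hl⟩ := mem_nhdsLT_iff_exists_Ioo_subset.1 hU
    obtain ⟨r, hrB, hlr, hrm⟩ := hlub.exists_between hlm
    exact ⟨r, hl ⟨hlr, hrm.lt_of_ne fun h => hmB (h ▸ hrB)⟩, hrB⟩
  obtain ⟨r₀, hr₀B, hr₀m⟩ := (hfreq.and_eventually self_mem_nhdsWithin).exists
  have hm0 : 0 < sSup B := (hBs r₀ hr₀B).1.trans_lt hr₀m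
  refine ⟨hms, ?_⟩
  rw [lm, if_neg hm0.ne']
  refine leftLim_le_of_frequently (hf.leftLimEx _ ⟨hm0, hms.trans hs1⟩) ?_ ?_
  · filter_upwards [Ioo_mem_nhdsLT hm0] with r hr
    exact hf.leftLimEx r ⟨hr.1, hr.2.le.trans (hms.trans hs1)⟩
  · refine (hfreq.and_eventually (Ioo_mem_nhdsLT hm0)).mono fun r ⟨hrB, hr⟩ => ?_
    have hrs := (hBs r hrB).2.2
    rw [lm, if_neg hr.1.ne'] at hrs
    exact hrs.trans (hf.infIcc_anti hr.2.le le_rfl hms)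

lemma isGreatest_mrca (hf : IsExcursion f) {s t : ℝ} (hs : s ∈ Icc (0:ℝ) 1)
    (ht : t ∈ Icc (0:ℝ) 1) : IsGreatest {r | 0 ≤ r ∧ pre f r s ∧ pre f r t} (mrca f s t) := by
  have h0 : (0:ℝ) ∈ {r | 0 ≤ r ∧ pre f r s ∧ pre f r t} :=
    ⟨le_rfl, hf.pre_zero hs.1, hf.pre_zero ht.1⟩
  have hbdd : BddAbove {r | 0 ≤ r ∧ pre f r s ∧ pre f r t} := ⟨s, fun r hr => hr.2.1.1⟩
  refine ⟨⟨le_csSup hbdd h0, ?_, ?_⟩, fun r hr => le_csSup hbdd hr⟩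
  · exact hf.pre_sSup hs.2 ⟨0, h0⟩ fun r hr => ⟨hr.1, hr.2.1⟩
  · exact hf.pre_sSup ht.2 ⟨0, h0⟩ fun r hr => ⟨hr.1, hr.2.2⟩

lemma mrca_self (hf : IsExcursion f) {t : ℝ} (ht : t ∈ Icc (0:ℝ) 1) : mrca f t t = t :=
  (hf.isGreatest_mrca ht ht).unique
    ⟨⟨ht.1, hf.pre_refl ht, hf.pre_refl ht⟩, fun _ hr => hr.2.1.1⟩

lemma mrca_eq_of_lt (hf : IsExcursion f) {s t u : ℝ} (hs : s ∈ Icc (0:ℝ) 1)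
    (ht : t ∈ Icc (0:ℝ) 1) (hu : u ∈ Icc (0:ℝ) 1) (hlt : mrca f s t < mrca f t u) :
    mrca f s u = mrca f s t := by
  obtain ⟨⟨ha0, has, hat⟩, ha⟩ := hf.isGreatest_mrca hs ht
  obtain ⟨⟨hb0, hbt, hbu⟩, -⟩ := hf.isGreatest_mrca ht hu
  refine (hf.isGreatest_mrca hs hu).unique ⟨⟨ha0, has,
    hf.pre_trans ha0 hu.2 (hf.pre_of_le hat hbt hlt.le) hbu⟩, fun r ⟨hr0, hrs, hru⟩ => ?_⟩
  rcases le_total r (mrca f t u) with hrb | hbr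
  · exact ha ⟨hr0, hrs, hf.pre_trans hr0 ht.2 (hf.pre_of_le hru hbu hrb) hbt⟩
  · exact absurd (ha ⟨hb0, hf.pre_trans hb0 hs.2 (hf.pre_of_le hbu hru hbr) hrs, hbt⟩)
      hlt.not_ge

lemma pre_mrca_of_le (hf : IsExcursion f) {s t u : ℝ} (hs : s ∈ Icc (0:ℝ) 1)
    (ht : t ∈ Icc (0:ℝ) 1) (hu : u ∈ Icc (0:ℝ) 1) (hle : mrca f s t ≤ mrca f t u) :
    pre f (mrca f s t) (mrca f s u) := by
  obtain ⟨⟨ha0, has, hat⟩, -⟩ := hf.isGreatest_mrca hs ht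
  obtain ⟨⟨-, hbt, hbu⟩, -⟩ := hf.isGreatest_mrca ht hu
  obtain ⟨⟨-, hns, -⟩, hn⟩ := hf.isGreatest_mrca hs hu
  exact hf.pre_of_le has hns
    (hn ⟨ha0, has, hf.pre_trans ha0 hu.2 (hf.pre_of_le hat hbt hle) hbu⟩)

lemma dTanc_eq_height_sub (hf : IsExcursion f) {m s : ℝ} (hm : 0 ≤ m) (hms : pre f m s)
    (hs1 : s ≤ 1) : dTanc f m s = height f s - height f m := by
  rcases hm.eq_or_lt with rfl | hm0
  · unfold height
    rw [dTanc_self, sub_zero]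
  · unfold height
    rw [hf.dTanc_split le_rfl hm0 (hf.pre_zero hm) hms hs1]
    ring

lemma height_mono (hf : IsExcursion f) {m s : ℝ} (hm : 0 ≤ m) (hms : pre f m s)
    (hs1 : s ≤ 1) : height f m ≤ height f s := by
  linarith [hf.dTanc_eq_height_sub hm hms hs1, hf.dTanc_nonneg hm hms.1 hs1]

lemma dT_eq_height (hf : IsExcursion f) {s t : ℝ} (hs : s ∈ Icc (0:ℝ) 1)
    (ht : t ∈ Icc (0:ℝ) 1) : dT f s t = height f s + height f t - 2 * height f (mrca f s t) := by
  obtain ⟨⟨h0, hms, hmt⟩, -⟩ := hf.isGreatest_mrca hs ht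
  rw [dT, hf.dTanc_eq_height_sub h0 hms hs.2, hf.dTanc_eq_height_sub h0 hmt ht.2]
  ring

lemma dT_nonneg (hf : IsExcursion f) {s t : ℝ} (hs : s ∈ Icc (0:ℝ) 1)
    (ht : t ∈ Icc (0:ℝ) 1) : 0 ≤ dT f s t := by
  obtain ⟨⟨h0, hms, hmt⟩, -⟩ := hf.isGreatest_mrca hs ht
  exact add_nonneg (hf.dTanc_nonneg h0 hms.1 hs.2) (hf.dTanc_nonneg h0 hmt.1 ht.2)

lemma dT_self (hf : IsExcursion f) {t : ℝ} (ht : t ∈ Icc (0:ℝ) 1) : dT f t t = 0 := by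
  rw [dT, hf.mrca_self ht, dTanc_self, add_zero]

/-- Both `s ∧ t` and `t ∧ u` are ancestors of `t`, and the lower one is an ancestor of `s ∧ u`. -/
lemma height_mrca_add_le (hf : IsExcursion f) {s t u : ℝ} (hs : s ∈ Icc (0:ℝ) 1)
    (ht : t ∈ Icc (0:ℝ) 1) (hu : u ∈ Icc (0:ℝ) 1) :
    height f (mrca f s t) + height f (mrca f t u) ≤ height f t + height f (mrca f s u) := by
  obtain ⟨⟨ha0, -, hat⟩, -⟩ := hf.isGreatest_mrca hs ht
  obtain ⟨⟨hb0, hbt, -⟩, -⟩ := hf.isGreatest_mrca ht hu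
  obtain ⟨⟨-, hns, -⟩, -⟩ := hf.isGreatest_mrca hs hu
  rcases le_total (mrca f s t) (mrca f t u) with h | h
  · have han := hf.pre_mrca_of_le hs ht hu h
    linarith [hf.height_mono ha0 han (hns.1.trans hs.2), hf.height_mono hb0 hbt ht.2]
  · rw [mrca_comm f s t, mrca_comm f t u] at h
    have hbn := hf.pre_mrca_of_le hu ht hs h
    rw [mrca_comm f u t, mrca_comm f u s] at hbn
    linarith [hf.height_mono hb0 hbn (hns.1.trans hs.2), hf.height_mono ha0 hat ht.2]

lemma dT_triangle (hf : IsExcursion f) {s t u : ℝ} (hs : s ∈ Icc (0:ℝ) 1)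
    (ht : t ∈ Icc (0:ℝ) 1) (hu : u ∈ Icc (0:ℝ) 1) : dT f s u ≤ dT f s t + dT f t u := by
  rw [hf.dT_eq_height hs hu, hf.dT_eq_height hs ht, hf.dT_eq_height ht hu]
  linarith [hf.height_mrca_add_le hs ht hu]

lemma dL_nonneg (hf : IsExcursion f) {s t : ℝ} (hs : s ∈ Icc (0:ℝ) 1)
    (ht : t ∈ Icc (0:ℝ) 1) : 0 ≤ dL f s t := by
  obtain ⟨⟨h0, hms, hmt⟩, -⟩ := hf.isGreatest_mrca hs ht
  have hm : mrca f s t ∈ Icc (0:ℝ) 1 := ⟨h0, hms.1.trans hs.2⟩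
  exact add_nonneg (add_nonneg (cdel_nonneg (hf.xst_mem_Icc hm hms.1) (hf.xst_mem_Icc hm hmt.1))
    (hf.dO_nonneg h0 hs.2)) (hf.dO_nonneg h0 ht.2)

lemma dL_self (hf : IsExcursion f) {t : ℝ} (ht : t ∈ Icc (0:ℝ) 1) : dL f t t = 0 := by
  rw [dL, hf.mrca_self ht, cdel_self (hf.jump_nonneg t ht), dO_self, add_zero, add_zero]

lemma dL_le_of_pre (hf : IsExcursion f) {m s t : ℝ} (hs : s ∈ Icc (0:ℝ) 1)
    (ht : t ∈ Icc (0:ℝ) 1) (hm0 : 0 ≤ m) (hms : pre f m s) (hmt : pre f m t) :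
    dL f s t ≤ cdel f m (xst f m s) (xst f m t) + dO f m s + dO f m t := by
  obtain ⟨⟨hn0, hns, hnt⟩, hn⟩ := hf.isGreatest_mrca hs ht
  have hmn : pre f m (mrca f s t) := hf.pre_of_le hms hns (hn ⟨hm0, hms, hmt⟩)
  rcases hmn.1.eq_or_lt with heq | hlt
  · rw [dL, ← heq]
  have hmI : m ∈ Icc (0:ℝ) 1 := ⟨hm0, hms.1.trans hs.2⟩
  have hnI : mrca f s t ∈ Icc (0:ℝ) 1 := ⟨hn0, hns.1.trans hs.2⟩
  have htri := cdel_triangle (hf.xst_mem_Icc hnI hns.1) ⟨le_rfl, hf.jump_nonneg _ hnI⟩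
    (hf.xst_mem_Icc hnI hnt.1)
  rw [cdel_comm f _ _ 0] at htri
  rw [dL, hf.dO_split hm0 hlt hmn hns hs.2, hf.dO_split hm0 hlt hmn hnt ht.2]
  linarith [cdel_nonneg (hf.xst_mem_Icc hmI hms.1) (hf.xst_mem_Icc hmI hmt.1),
    hf.dO_nonneg hm0 hnI.2]

lemma dL_triangle_of_le (hf : IsExcursion f) {s t u : ℝ} (hs : s ∈ Icc (0:ℝ) 1)
    (ht : t ∈ Icc (0:ℝ) 1) (hu : u ∈ Icc (0:ℝ) 1) (hle : mrca f s t ≤ mrca f t u) :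
    dL f s u ≤ dL f s t + dL f t u := by
  obtain ⟨⟨ha0, has, hat⟩, -⟩ := hf.isGreatest_mrca hs ht
  obtain ⟨⟨hb0, hbt, hbu⟩, -⟩ := hf.isGreatest_mrca ht hu
  have haI : mrca f s t ∈ Icc (0:ℝ) 1 := ⟨ha0, has.1.trans hs.2⟩
  have hbI : mrca f t u ∈ Icc (0:ℝ) 1 := ⟨hb0, hbt.1.trans ht.2⟩
  rcases hle.eq_or_lt with heq | hlt
  · have hau : pre f (mrca f s t) u := heq ▸ hbu
    calc dL f s u ≤ cdel f (mrca f s t) (xst f (mrca f s t) s) (xst f (mrca f s t) u)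
          + dO f (mrca f s t) s + dO f (mrca f s t) u := hf.dL_le_of_pre hs hu ha0 has hau
      _ ≤ dL f s t + dL f t u := by
        rw [dL, dL, ← heq]
        linarith [cdel_triangle (hf.xst_mem_Icc haI has.1) (hf.xst_mem_Icc haI hat.1)
          (hf.xst_mem_Icc haI hau.1), hf.dO_nonneg ha0 ht.2]
  · have hab : pre f (mrca f s t) (mrca f t u) := hf.pre_of_le hat hbt hlt.le
    have hx : xst f (mrca f s t) u = xst f (mrca f s t) t := by
      rw [hf.xst_eq_of_lt_of_pre ha0 hlt hbu hu.2, hf.xst_eq_of_lt_of_pre ha0 hlt hbt ht.2]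
    rw [dL, dL, dL, hf.mrca_eq_of_lt hs ht hu hlt, hx, hf.dO_split ha0 hlt hab hbu hu.2,
      hf.dO_split ha0 hlt hab hbt ht.2]
    linarith [cdel_triangle ⟨le_rfl, hf.jump_nonneg _ hbI⟩ (hf.xst_mem_Icc hbI hbt.1)
      (hf.xst_mem_Icc hbI hbu.1), hf.dO_nonneg hb0 ht.2]

lemma dL_triangle (hf : IsExcursion f) {s t u : ℝ} (hs : s ∈ Icc (0:ℝ) 1)
    (ht : t ∈ Icc (0:ℝ) 1) (hu : u ∈ Icc (0:ℝ) 1) : dL f s u ≤ dL f s t + dL f t u := by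
  rcases le_total (mrca f s t) (mrca f t u) with h | h
  · exact hf.dL_triangle_of_le hs ht hu h
  · rw [mrca_comm f s t, mrca_comm f t u] at h
    have := hf.dL_triangle_of_le hu ht hs h
    rw [dL_comm f u s, dL_comm f u t, dL_comm f t s] at this
    linarith

end IsExcursion

theorem statement4 (f : ℝ → ℝ) (hf : IsExcursion f) :
    (∀ s ∈ Icc (0:ℝ) 1, ∀ t ∈ Icc (0:ℝ) 1,
        0 ≤ dL f s t ∧ 0 ≤ dT f s t ∧ 0 ≤ dV f s t) ∧
    (∀ s ∈ Icc (0:ℝ) 1, ∀ t ∈ Icc (0:ℝ) 1,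
        dL f s t = dL f t s ∧ dT f s t = dT f t s ∧ dV f s t = dV f t s) ∧
    (∀ t ∈ Icc (0:ℝ) 1, dL f t t = 0 ∧ dT f t t = 0 ∧ dV f t t = 0) ∧
    (∀ s ∈ Icc (0:ℝ) 1, ∀ t ∈ Icc (0:ℝ) 1, ∀ u ∈ Icc (0:ℝ) 1,
        dL f s u ≤ dL f s t + dL f t u ∧
        dT f s u ≤ dT f s t + dT f t u ∧
        dV f s u ≤ dV f s t + dV f t u) := by
  refine ⟨fun s hs t ht => ?_, fun s _ t _ => ?_, fun t ht => ?_, fun s hs t ht u hu => ?_⟩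
  · have hL := hf.dL_nonneg hs ht
    have hT := hf.dT_nonneg hs ht
    exact ⟨hL, hT, by rw [dV]; positivity⟩
  · exact ⟨dL_comm f s t, dT_comm f s t, by rw [dV, dV, dL_comm, dT_comm]⟩
  · have hL := hf.dL_self ht
    have hT := hf.dT_self ht
    exact ⟨hL, hT, by rw [dV, hL, hT, mul_zero, add_zero]⟩
  · have hL := hf.dL_triangle hs ht hu
    have hT := hf.dT_triangle hs ht hu
    exact ⟨hL, hT, by simp only [dV]; linarith⟩
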